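/- arXiv:2210.14676 — 3 statements merged into one kernel-verified Lean document; each statement's English description precedes it below -/
import Mathlib

section
/- Let K be a field with a non-archimedean absolute value |·|, of characteristic 0 or characteristic p > m, and let g(z) = (z − a_1)⋯(z − a_m) ∈ K[z] be monic of degree m ≥ 2 with roots a_1,…,a_m and g'(z) = m(z − c_1)⋯(z − c_{m−1}). Then for every critical point c_i of g, |c_i| ≤ max(|a_1|,…,|a_m|)·|m|^{−1}. -/
open Polynomial

private lemma na_sum {K : Type*} [Field K] (v : AbsoluteValue K ℝ)
    (hv : IsNonarchimedean (v : K → ℝ)) {ι : Type*} (s : Finset ι) (g : ι → K) {B : ℝ}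
    (hB : 0 ≤ B) (h : ∀ i ∈ s, v (g i) ≤ B) : v (∑ i ∈ s, g i) ≤ B := by
  classical
  induction s using Finset.induction_on with
  | empty => simpa using hB
  | @insert a s ha ih =>
    rw [Finset.sum_insert ha]
    exact le_trans (hv _ _) (max_le (h a (Finset.mem_insert_self a s))
      (ih fun i hi => h i (Finset.mem_insert_of_mem hi)))

private lemma na_natCast {K : Type*} [Field K] (v : AbsoluteValue K ℝ)
    (hv : IsNonarchimedean (v : K → ℝ)) (n : ℕ) : v (n : K) ≤ 1 := by
  induction n with
  | zero => simp
  | succ n ih =>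
    push_cast
    exact le_trans (hv _ _) (max_le ih (by simp))

private lemma na_coeff_prod {K : Type*} [Field K] (v : AbsoluteValue K ℝ)
    (hv : IsNonarchimedean (v : K → ℝ)) {ι : Type*} (b : ι → K) {R : ℝ}
    (hR : 0 ≤ R) (s : Finset ι) :
    (∀ i ∈ s, v (b i) ≤ R) → ∀ k : ℕ, v ((∏ i ∈ s, (X - C (b i))).coeff k) ≤ R ^ (s.card - k) := by
  classical
  induction s using Finset.induction_on with
  | empty =>
    intro _ k
    cases k <;> simp [coeff_one]
  | @insert a s ha ih =>
    intro hb k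
    have hb' : ∀ i ∈ s, v (b i) ≤ R := fun i hi => hb i (Finset.mem_insert_of_mem hi)
    have hba : v (b a) ≤ R := hb a (Finset.mem_insert_self a s)
    set P : K[X] := ∏ i ∈ s, (X - C (b i)) with hP
    have hdeg : P.natDegree = s.card := by
      rw [hP, natDegree_prod_of_monic _ _ (fun i _ => monic_X_sub_C _)]
      simp
    rw [Finset.prod_insert ha, Finset.card_insert_of_notMem ha, ← hP]
    have expand : ∀ j : ℕ, ((X - C (b a)) * P).coeff j = (X * P).coeff j - b a * P.coeff j := by
      intro j
      rw [sub_mul, coeff_sub, coeff_C_mul]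
    cases k with
    | zero =>
      rw [expand 0]
      have h0 : (X * P).coeff 0 = 0 := by simp [mul_coeff_zero]
      rw [h0, zero_sub, v.map_neg, v.map_mul]
      have hsz : s.card + 1 - 0 = s.card + 1 := rfl
      rw [hsz, pow_succ']
      exact mul_le_mul hba (by simpa using ih hb' 0) (v.nonneg _) hR
    | succ j =>
      rw [expand (j + 1), coeff_X_mul]
      have h1 : v (P.coeff j) ≤ R ^ (s.card - j) := ih hb' j
      have h2 : v (b a * P.coeff (j + 1)) ≤ R ^ (s.card - j) := by
        by_cases hj : j + 1 ≤ s.card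
        · rw [v.map_mul]
          have : s.card - j = (s.card - (j + 1)) + 1 := by omega
          rw [this, pow_succ']
          exact mul_le_mul hba (ih hb' (j + 1)) (v.nonneg _) hR
        · have : P.coeff (j + 1) = 0 := by
            apply coeff_eq_zero_of_natDegree_lt
            omega
          rw [this, mul_zero, v.map_zero]
          positivity
      have hmax : v (P.coeff j - b a * P.coeff (j + 1)) ≤
          max (v (P.coeff j)) (v (b a * P.coeff (j + 1))) := by
        have := hv (P.coeff j) (-(b a * P.coeff (j + 1)))
        rwa [v.map_neg, ← sub_eq_add_neg] at this
      have : s.card + 1 - (j + 1) = s.card - j := by omega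
      rw [this]
      exact le_trans hmax (max_le h1 h2)

/-- Let `K` be a field with a non-archimedean absolute value, of characteristic `0`
or `p > m`, and `g(z) = (z-a_1)⋯(z-a_m)` monic of degree `m ≥ 2` with
`g'(z) = m(z-c_1)⋯(z-c_{m-1})`.  Then every critical point `c_i` of `g` satisfies
`|c_i| ≤ max_j |a_j| · |m|⁻¹`. -/
theorem nonarch_critical_point_bound {K : Type*} [Field K]
    (v : AbsoluteValue K ℝ) (hv : IsNonarchimedean (v : K → ℝ))
    (p : ℕ) (hp : CharP K p) (m : ℕ) (hm : 2 ≤ m) (hchar : p = 0 ∨ m < p)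
    (a : Fin m → K) (c : Fin (m - 1) → K)
    (g : Polynomial K) (hg : g = ∏ i : Fin m, (X - C (a i)))
    (hg' : g.derivative = C (m : K) * ∏ j : Fin (m - 1), (X - C (c j))) :
    ∀ i : Fin (m - 1), v (c i) ≤ (⨆ j, v (a j)) * (v (m : K))⁻¹ := by
  intro i
  classical
  have hm0 : (m : K) ≠ 0 := by
    rcases hchar with h0 | hlt
    · subst h0
      have : CharZero K := CharP.charP_to_charZero K
      exact_mod_cast Nat.cast_ne_zero.mpr (by omega)
    · intro hzero
      have hdvd := (CharP.cast_eq_zero_iff K p m).mp hzero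
      have := Nat.le_of_dvd (by omega) hdvd
      omega
  have hMpos : 0 < v (m : K) := v.pos hm0
  have hM1 : v (m : K) ≤ 1 := na_natCast v hv m
  have hMinv : 1 ≤ (v (m : K))⁻¹ := by
    rw [le_inv_comm₀ one_pos hMpos]
    simpa using hM1
  set R : ℝ := ⨆ j, v (a j) with hR
  have hbdd : BddAbove (Set.range fun j => v (a j)) :=
    Set.Finite.bddAbove (Set.finite_range _)
  have hRb : ∀ j : Fin m, v (a j) ≤ R := fun j => le_ciSup hbdd j
  have hne : Nonempty (Fin m) := ⟨⟨0, by omega⟩⟩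
  have hRnn : 0 ≤ R := le_trans (v.nonneg _) (hRb (Classical.arbitrary _))
  set B : ℝ := R * (v (m : K))⁻¹ with hB
  have hBnn : 0 ≤ B := mul_nonneg hRnn (le_of_lt (inv_pos.mpr hMpos))
  have hn1 : 1 ≤ m - 1 := by omega
  set h : K[X] := ∏ j : Fin (m - 1), (X - C (c j)) with hh
  by_contra hcon
  push_neg at hcon
  set t : ℝ := v (c i) with ht
  have htpos : 0 < t := lt_of_le_of_lt hBnn hcon
  have hmonic : h.Monic := monic_prod_of_monic _ _ (fun j _ => monic_X_sub_C _)
  have hdeg : h.natDegree = (m - 1) := by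
    rw [hh, natDegree_prod_of_monic _ _ (fun j _ => monic_X_sub_C _)]
    simp
  -- coefficient bound on g
  have hgcoeff : ∀ k : ℕ, v (g.coeff k) ≤ R ^ (m - k) := by
    intro k
    rw [hg]
    have := na_coeff_prod v hv a hRnn Finset.univ (fun j _ => hRb j) k
    simpa using this
  -- coefficient bound on h
  have hcoeff : ∀ k : ℕ, k < m - 1 → v (h.coeff k) ≤ B ^ (m - 1 - k) := by
    intro k hk
    have e1 : g.coeff (k + 1) * ((k : K) + 1) = (m : K) * h.coeff k := by
      have e := congrArg (fun q : K[X] => q.coeff k) hg'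
      simpa [coeff_derivative, coeff_C_mul, hh] using e
    have ecast : ((k : K) + 1) = ((k + 1 : ℕ) : K) := by push_cast; ring
    have e2 : v (g.coeff (k + 1)) ≤ R ^ (m - 1 - k) := by
      have := hgcoeff (k + 1)
      have hexp : m - (k + 1) = m - 1 - k := by omega
      rwa [hexp] at this
    have e3 : v ((m : K)) * v (h.coeff k) ≤ R ^ (m - 1 - k) := by
      rw [← v.map_mul, ← e1, v.map_mul, ecast]
      calc v (g.coeff (k + 1)) * v (((k + 1 : ℕ) : K))
          ≤ R ^ (m - 1 - k) * 1 :=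
            mul_le_mul e2 (na_natCast v hv (k + 1)) (v.nonneg _) (by positivity)
        _ = R ^ (m - 1 - k) := mul_one _
    have e4 : v (h.coeff k) ≤ R ^ (m - 1 - k) * (v (m : K))⁻¹ := by
      rw [← div_eq_mul_inv, le_div_iff₀ hMpos, mul_comm]
      exact e3
    refine e4.trans ?_
    rw [hB, mul_pow]
    apply mul_le_mul_of_nonneg_left _ (by positivity)
    exact le_self_pow₀ hMinv (by omega)
  -- h vanishes at c i
  have hin : (i : ℕ) < m - 1 := by omega
  have heval : h.eval (c i) = 0 := by
    rw [hh, eval_prod]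
    exact Finset.prod_eq_zero (Finset.mem_univ i) (by simp)
  have hlead : h.coeff (m - 1) = 1 := by
    have := hmonic.coeff_natDegree
    rwa [hdeg] at this
  have hsum : (0 : K) = (∑ k ∈ Finset.range (m - 1), h.coeff k * (c i) ^ k) + (c i) ^ (m - 1) := by
    rw [← heval, eval_eq_sum_range, hdeg, Finset.sum_range_succ, hlead, one_mul]
  have hpowsum : (c i) ^ (m - 1) = -(∑ k ∈ Finset.range (m - 1), h.coeff k * (c i) ^ k) := by
    linear_combination -hsum
  -- bound the sum
  have hsumbound : v (∑ k ∈ Finset.range (m - 1), h.coeff k * (c i) ^ k) ≤ B * t ^ (m - 2) := by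
    apply na_sum v hv _ _ (by positivity)
    intro k hk
    rw [Finset.mem_range] at hk
    rw [v.map_mul, v.map_pow, ← ht]
    calc v (h.coeff k) * t ^ k ≤ B ^ (m - 1 - k) * t ^ k :=
          mul_le_mul_of_nonneg_right (hcoeff k hk) (by positivity)
      _ = B * B ^ (m - 1 - k - 1) * t ^ k := by
          have e5 : m - 1 - k = (m - 1 - k - 1) + 1 := by omega
          rw [e5, pow_succ']
          norm_num
      _ ≤ B * t ^ (m - 1 - k - 1) * t ^ k := by
          apply mul_le_mul_of_nonneg_right _ (by positivity)
          exact mul_le_mul_of_nonneg_left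
            (pow_le_pow_left₀ hBnn (le_of_lt hcon) _) hBnn
      _ = B * t ^ (m - 2) := by
          have e6 : m - 1 - k - 1 + k = m - 2 := by omega
          rw [mul_assoc, ← pow_add, e6]
  have hfin : t ^ (m - 1) ≤ B * t ^ (m - 2) := by
    have : v ((c i) ^ (m - 1)) = t ^ (m - 1) := by rw [v.map_pow]
    rw [← this, hpowsum, v.map_neg]
    exact hsumbound
  have hlt : B * t ^ (m - 2) < t * t ^ (m - 2) :=
    mul_lt_mul_of_pos_right hcon (by positivity)
  have hteq : t * t ^ (m - 2) = t ^ (m - 1) := by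
    have e7 : m - 1 = (m - 2) + 1 := by omega
    rw [e7, pow_succ']
  rw [hteq] at hlt
  linarith
end

section
/- Let |·| be a non-archimedean absolute value on a field K, let g be monic of degree m ≥ 2 with roots a_1,…,a_m in K, let d ≥ 1, and set f(z) = g(z^d), which has degree dm ≥ 2. If z ∈ K satisfies d·log|z| > log⁺ max_i |a_i|, then the escape-rate function G_f(z) = lim_{k→∞} (deg f)^{−k} · log⁺|f^k(z)| exists and equals log|z|. -/
open Polynomial Filter

/-- `log⁺ t = max (log t) 0`. -/
noncomputable def logPlus (t : ℝ) : ℝ := max (Real.log t) 0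

lemma nonarch_sub_eq {K : Type*} [Field K] (v : AbsoluteValue K ℝ)
    (hv : IsNonarchimedean (v : K → ℝ)) {x y : K} (h : v y < v x) :
    v (x - y) = v x := by
  apply le_antisymm
  · have h1 : v (x - y) ≤ max (v x) (v (-y)) := by
      simpa [sub_eq_add_neg] using hv x (-y)
    simpa [max_eq_left h.le] using h1
  · have h2 : v x ≤ max (v (x - y)) (v y) := by
      have := hv (x - y) y
      simpa using this
    rcases le_max_iff.mp h2 with h3 | h3
    · exact h3
    · exact absurd h3 (not_le_of_gt h)

/-- Non-archimedean escape rate: if `g` is monic of degree `m ≥ 2` with roots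
`a_1,…,a_m`, `f(z) = g(z^d)` and `d·log|z| > log⁺ max_i |a_i|`, then the
escape-rate function `G_f(z) = lim_k (deg f)^{-k} log⁺|f^k(z)|` exists and equals
`log|z|`. -/
theorem nonarch_green_function_eq_log {K : Type*} [Field K]
    (v : AbsoluteValue K ℝ) (hv : IsNonarchimedean (v : K → ℝ))
    (m : ℕ) (hm : 2 ≤ m) (d : ℕ) (hd : 1 ≤ d)
    (a : Fin m → K) (g : Polynomial K) (hg : g = ∏ i : Fin m, (X - C (a i)))
    (f : Polynomial K) (hf : f = g.comp (X ^ d))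
    (z : K) (hz : (d : ℝ) * Real.log (v z) > logPlus (⨆ i, v (a i))) :
    Tendsto (fun k : ℕ => logPlus (v ((fun w => f.eval w)^[k] z)) / ((d * m : ℝ)) ^ k)
      atTop (nhds (Real.log (v z))) := by
  have hd1 : (1:ℝ) ≤ (d:ℝ) := by exact_mod_cast hd
  have hS0 : (0:ℝ) ≤ logPlus (⨆ i, v (a i)) := le_max_right _ _
  have hlz : 0 < Real.log (v z) := by nlinarith
  have hvz1 : 1 < v z := by
    by_contra h
    push_neg at h
    exact absurd (Real.log_nonpos (v.nonneg z) h) (not_le_of_gt hlz)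
  have hdne : d ≠ 0 := by omega
  have hzd1 : 1 < v z ^ d := one_lt_pow₀ hvz1 hdne
  have ha : ∀ i, v (a i) < v z ^ d := by
    intro i
    rcases le_or_gt (v (a i)) 1 with h | h
    · exact lt_of_le_of_lt h hzd1
    · have hle : v (a i) ≤ ⨆ j, v (a j) :=
        le_ciSup (Set.Finite.bddAbove (Set.finite_range (fun j => v (a j)))) i
      have h1 : Real.log (v (a i)) ≤ Real.log (⨆ j, v (a j)) :=
        Real.log_le_log (by linarith) hle
      have h2 : Real.log (v (a i)) < Real.log (v z ^ d) := by
        rw [Real.log_pow]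
        calc Real.log (v (a i)) ≤ Real.log (⨆ j, v (a j)) := h1
          _ ≤ logPlus (⨆ j, v (a j)) := le_max_left _ _
          _ < (d:ℝ) * Real.log (v z) := hz
          _ = (d:ℕ) * Real.log (v z) := by norm_cast
      exact (Real.log_lt_log_iff (by linarith) (by linarith)).mp h2
  have hfe : ∀ w : K, (∀ i, v (a i) < v w ^ d) → v (f.eval w) = v w ^ (d * m) := by
    intro w hw
    have hev : f.eval w = ∏ i : Fin m, (w ^ d - a i) := by
      simp [hf, hg, eval_comp, eval_prod]
    rw [hev, map_prod]
    have hterm : ∀ i : Fin m, v (w ^ d - a i) = v w ^ d := by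
      intro i
      rw [nonarch_sub_eq v hv (by rw [map_pow]; exact hw i), map_pow]
    calc ∏ i : Fin m, v (w ^ d - a i) = ∏ _i : Fin m, v w ^ d :=
          Finset.prod_congr rfl (fun i _ => hterm i)
      _ = (v w ^ d) ^ m := by simp
      _ = v w ^ (d * m) := by rw [← pow_mul]
  have hk : ∀ k : ℕ, v ((fun w => f.eval w)^[k] z) = v z ^ ((d * m) ^ k) := by
    intro k
    induction k with
    | zero => simp
    | succ k ih =>
      rw [Function.iterate_succ_apply']
      have hwk : ∀ i, v (a i) < v ((fun w => f.eval w)^[k] z) ^ d := by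
        intro i
        rw [ih, ← pow_mul]
        refine lt_of_lt_of_le (ha i) ?_
        have hpos : 0 < d * m := Nat.mul_pos (by omega) (by omega)
        exact pow_le_pow_right₀ hvz1.le (by nlinarith [pow_pos hpos k] : d ≤ (d * m) ^ k * d)
      rw [hfe _ hwk, ih, ← pow_mul, ← pow_succ]
  have heq : (fun k : ℕ => logPlus (v ((fun w => f.eval w)^[k] z)) / ((d * m : ℝ)) ^ k)
      = fun _ : ℕ => Real.log (v z) := by
    funext k
    rw [hk k]
    unfold logPlus
    rw [Real.log_pow, max_eq_left (by positivity)]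
    have hne : ((d : ℝ) * m) ^ k ≠ 0 := by
      apply pow_ne_zero
      have : (0:ℝ) < (d:ℝ) * m := by
        have hm1 : (1:ℝ) ≤ (m:ℝ) := by exact_mod_cast (by omega : 1 ≤ m)
        nlinarith
      exact ne_of_gt this
    push_cast
    field_simp
  rw [heq]
  exact tendsto_const_nhds
end

section
/- Let g(z) = (z − a_1)⋯(z − a_m) ∈ ℂ[z] with m ≥ 2, let d ≥ 1, f(z) = g(z^d), and suppose z ∈ ℂ satisfies d·log|z| > log⁺ max_i|a_i| + (m/(m−1))·log 2. Then |z^d − a_i| > |z|^d/2 for all i, and log|f(z)| ≥ (dm)·log|z| − m·log 2; moreover f(z) again satisfies the same hypothesis: d·log|f(z)| > log⁺ max_i|a_i| + (m/(m−1))·log 2. -/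
/-!
Write `A = max_i |a_i|` and `C = (m/(m-1))·log 2 ≥ log 2`. The hypothesis gives
`|z|^d > 2·exp(log⁺ A) ≥ 2A`, so every factor `z^d - a_i` of `f(z)` has modulus more than
`|z|^d/2`, whence `log|f(z)| ≥ m·(d·log|z| - log 2)`. The constant `C` is the fixed point of
`x ↦ m·(x - log 2)`, so multiplying the hypothesis by `m` and subtracting `m·log 2` yields
`log|f(z)| > m·log⁺ A + C ≥ log⁺ A + C`; this is positive, so multiplying by `d ≥ 1` keeps it.
-/

open Polynomial

open Real

lemma logPlus_nonneg (t : ℝ) : 0 ≤ logPlus t := le_max_right _ _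

lemma le_exp_logPlus (t : ℝ) : t ≤ exp (logPlus t) := by
  rcases le_or_gt t 0 with ht | ht
  · exact ht.trans (exp_pos _).le
  · calc t = exp (log t) := (exp_log ht).symm
      _ ≤ exp (logPlus t) := exp_le_exp.2 (le_max_left _ _)

lemma two_mul_lt_pow_of_logPlus_add_log_two_lt {A r : ℝ} {n : ℕ} (hr : 0 ≤ r)
    (h : logPlus A + log 2 < n * log r) : 2 * A < r ^ n := by
  have hr0 : r ≠ 0 := by
    rintro rfl
    rw [log_zero, mul_zero] at h
    linarith [logPlus_nonneg A, log_pos one_lt_two]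
  calc 2 * A ≤ 2 * exp (logPlus A) := by linarith [le_exp_logPlus A]
    _ = exp (logPlus A + log 2) := by rw [exp_add, exp_log two_pos, mul_comm]
    _ < exp (n * log r) := exp_lt_exp.2 h
    _ = r ^ n := by rw [← log_pow, exp_log (pow_pos (hr.lt_of_ne' hr0) n)]

lemma log_two_le_div_sub_one_mul_log_two {m : ℝ} (hm : 2 ≤ m) :
    log 2 ≤ m / (m - 1) * log 2 :=
  le_mul_of_one_le_left (log_pos one_lt_two).le <| by
    rw [le_div_iff₀ (by linarith)]; linarith

lemma logPlus_add_lt_mul_sub_log_two {m L x : ℝ} (hm : 2 ≤ m) (hL : 0 ≤ L)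
    (hx : L + m / (m - 1) * log 2 < x) :
    L + m / (m - 1) * log 2 < m * (x - log 2) := by
  have hfix : m * (m / (m - 1) * log 2 - log 2) = m / (m - 1) * log 2 := by
    have : m - 1 ≠ 0 := by linarith
    field_simp
    ring
  have hgap : 0 < m * (x - L - m / (m - 1) * log 2) := mul_pos (by linarith) (by linarith)
  have hmL : L ≤ m * L := le_mul_of_one_le_left hL (by linarith)
  linarith

lemma norm_div_two_lt_norm_sub {E : Type*} [SeminormedAddCommGroup E] {w b : E}
    (h : 2 * ‖b‖ < ‖w‖) : ‖w‖ / 2 < ‖w - b‖ := by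
  linarith [norm_sub_norm_le w b]

lemma card_mul_log_le_log_norm_prod {ι K : Type*} [Fintype ι] [NormedField K] {w : ι → K}
    {c : ℝ} (hc : 0 < c) (h : ∀ i, c ≤ ‖w i‖) :
    Fintype.card ι * log c ≤ log ‖∏ i, w i‖ := by
  rw [← log_pow, norm_prod]
  refine log_le_log (pow_pos hc _) ?_
  calc c ^ Fintype.card ι = ∏ _i : ι, c := by simp
    _ ≤ ∏ i, ‖w i‖ := Finset.prod_le_prod (fun _ _ => hc.le) (fun i _ => h i)

lemma eval_prod_X_sub_C_comp_X_pow {ι R : Type*} [Fintype ι] [CommRing R] (a : ι → R)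
    (d : ℕ) (z : R) : ((∏ i, (X - C (a i))).comp (X ^ d)).eval z = ∏ i, (z ^ d - a i) := by
  simp [eval_comp, eval_prod]

/-- Archimedean escape: if `g(z) = (z-a_1)⋯(z-a_m)` with `m ≥ 2`, `f(z) = g(z^d)`
and `d·log|z| > log⁺ max_i |a_i| + (m/(m-1))·log 2`, then `|z^d - a_i| > |z|^d/2`
for all `i`, `log|f(z)| ≥ dm·log|z| - m·log 2`, and `f(z)` satisfies the same
hypothesis. -/
theorem arch_escape_step (m : ℕ) (hm : 2 ≤ m) (d : ℕ) (hd : 1 ≤ d)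
    (a : Fin m → ℂ) (g : Polynomial ℂ) (hg : g = ∏ i : Fin m, (X - C (a i)))
    (f : Polynomial ℂ) (hf : f = g.comp (X ^ d))
    (z : ℂ) (hz : (d : ℝ) * Real.log (‖z‖) >
      logPlus (⨆ i, ‖a i‖) + ((m : ℝ) / (m - 1)) * Real.log 2) :
    (∀ i, ‖z ^ d - a i‖ > ‖z‖ ^ d / 2) ∧
    Real.log (‖f.eval z‖) ≥
      ((d * m : ℕ) : ℝ) * Real.log (‖z‖) - m * Real.log 2 ∧
    (d : ℝ) * Real.log (‖f.eval z‖) >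
      logPlus (⨆ i, ‖a i‖) + ((m : ℝ) / (m - 1)) * Real.log 2 := by
  have hmR : (2 : ℝ) ≤ m := by exact_mod_cast hm
  set A := ⨆ i, ‖a i‖
  have hA : ∀ i, ‖a i‖ ≤ A := le_ciSup (Set.finite_range _).bddAbove
  have hescape : 2 * A < ‖z‖ ^ d := two_mul_lt_pow_of_logPlus_add_log_two_lt (norm_nonneg z)
    (by linarith [log_two_le_div_sub_one_mul_log_two hmR])
  have hzd : 0 < ‖z‖ ^ d := by linarith [Real.iSup_nonneg fun i => norm_nonneg (a i)]
  have hfactor : ∀ i, ‖z‖ ^ d / 2 < ‖z ^ d - a i‖ := fun i => by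
    have : 2 * ‖a i‖ < ‖z ^ d‖ := by rw [norm_pow]; linarith [hA i]
    simpa only [norm_pow] using norm_div_two_lt_norm_sub this
  have hlogf : m * (d * log ‖z‖ - log 2) ≤ log ‖f.eval z‖ := by
    have := card_mul_log_le_log_norm_prod (by positivity) fun i => (hfactor i).le
    rwa [Fintype.card_fin, log_div hzd.ne' two_ne_zero, log_pow,
      ← eval_prod_X_sub_C_comp_X_pow, ← hg, ← hf] at this
  have hgrow := logPlus_add_lt_mul_sub_log_two hmR (logPlus_nonneg A) hz
  refine ⟨hfactor, by push_cast; linarith, ?_⟩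
  have hlogf_pos : 0 < log ‖f.eval z‖ := by
    linarith [logPlus_nonneg A, log_two_le_div_sub_one_mul_log_two hmR, log_pos one_lt_two]
  have hdR : (1 : ℝ) ≤ d := by exact_mod_cast hd
  linarith [le_mul_of_one_le_left hlogf_pos.le hdR]
end
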